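/- Let m and n be positive integers with m > n. If the difference δ(n) − δ(m) is a rational number, then it is a nonnegative integer and m = n · 3^k for some integer k ≥ 1. Moreover, if δ(n) = δ(m), then m = n · 3^k for some k ≥ 1 and ‖n · 3^j‖ = 3j + ‖n‖ for every 0 ≤ j ≤ k; in particular δ(n) = δ(m) implies ‖n‖ ≡ ‖m‖ (mod 3). -/

import Mathlib

/-!
Since `δ(n) - δ(m) = ‖n‖ - ‖m‖ + 3 (log₃ m - log₃ n)`, a rational difference forces `log₃ (m / n)`
to be rational, say `e / q`; then `m ^ q = n ^ q * 3 ^ e`, and unique factorization gives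
`m = n * 3 ^ k`. For such `m` the difference is `‖n‖ + 3k - ‖m‖`, which is a natural number
because `‖3‖ ≤ 3` and complexity is submultiplicative. If it vanishes, the bound
`‖n 3^k‖ ≤ ‖n 3^j‖ + 3 (k - j)` makes every intermediate bound `‖n 3^j‖ ≤ ‖n‖ + 3j` tight.
-/

open Real

/-- `Writes n k` means the positive integer `n` can be written using exactly `k` ones
combined by additions and multiplications. -/
inductive Writes : ℕ → ℕ → Prop
  | one : Writes 1 1
  | add {a b m n : ℕ} : Writes a m → Writes b n → Writes (a + b) (m + n)
  | mul {a b m n : ℕ} : Writes a m → Writes b n → Writes (a * b) (m + n)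

/-- The integer complexity `‖n‖`: the least number of 1's needed to write `n`
using additions and multiplications. -/
noncomputable def cpx (n : ℕ) : ℕ := sInf {k | Writes n k}

/-- The defect `δ(n) = ‖n‖ - 3 log₃ n`. -/
noncomputable def defect (n : ℕ) : ℝ := (cpx n : ℝ) - 3 * Real.logb 3 n

lemma writes_self {n : ℕ} (hn : 0 < n) : Writes n n := by
  induction n with
  | zero => omega
  | succ k ih =>
    rcases Nat.eq_zero_or_pos k with rfl | hk
    · exact Writes.one
    · exact Writes.add (ih hk) Writes.one

lemma writes_cpx {n : ℕ} (hn : 0 < n) : Writes n (cpx n) :=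
  Nat.sInf_mem ⟨n, writes_self hn⟩

lemma cpx_mul_le {a b : ℕ} (ha : 0 < a) (hb : 0 < b) : cpx (a * b) ≤ cpx a + cpx b :=
  Nat.sInf_le (Writes.mul (writes_cpx ha) (writes_cpx hb))

lemma cpx_three_le : cpx 3 ≤ 3 :=
  Nat.sInf_le (Writes.add (Writes.add Writes.one Writes.one) Writes.one :
    Writes (1 + 1 + 1) (1 + 1 + 1))

lemma cpx_mul_pow_three_le {n : ℕ} (hn : 0 < n) (k : ℕ) : cpx (n * 3 ^ k) ≤ cpx n + 3 * k := by
  induction k with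
  | zero => simp
  | succ k ih =>
    have hstep := cpx_mul_le (a := n * 3 ^ k) (b := 3) (by positivity) (by norm_num)
    rw [pow_succ, ← mul_assoc]
    have := cpx_three_le
    omega

lemma cpx_mul_pow_three_eq_of_eq_of_le {n k j : ℕ} (hn : 0 < n) (htight : cpx (n * 3 ^ k) = 3 * k + cpx n)
    (hj : j ≤ k) : cpx (n * 3 ^ j) = 3 * j + cpx n := by
  have hlow := cpx_mul_pow_three_le hn j
  have hhigh := cpx_mul_pow_three_le (n := n * 3 ^ j) (by positivity) (k - j)
  rw [mul_assoc, ← pow_add, Nat.add_sub_cancel' hj] at hhigh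
  omega

lemma exists_eq_mul_prime_pow_of_pow_eq {p m n q e : ℕ} (hp : p.Prime) (hn : 0 < n)
    (hq : q ≠ 0) (h : m ^ q = n ^ q * p ^ e) : ∃ k, m = n * p ^ k := by
  obtain ⟨c, rfl⟩ : n ∣ m := (Nat.pow_dvd_pow_iff hq).1 ⟨_, h⟩
  have hc : c ^ q = p ^ e := by
    rw [mul_pow] at h
    exact Nat.eq_of_mul_eq_mul_left (by positivity) h
  obtain ⟨k, -, rfl⟩ := (Nat.dvd_prime_pow hp).1 (hc ▸ dvd_pow_self c hq)
  exact ⟨k, rfl⟩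

lemma exists_eq_mul_prime_pow_of_logb_sub_eq_rat {p m n : ℕ} (hp : p.Prime) (hn : 0 < n)
    (hmn : n < m) (r : ℚ) (h : logb p m - logb p n = r) : ∃ k, 1 ≤ k ∧ m = n * p ^ k := by
  have hp1 : (1 : ℝ) < p := by exact_mod_cast hp.one_lt
  have hm : 0 < m := hn.trans hmn
  have hr : 0 < r := by
    have := logb_lt_logb hp1 (by positivity) (by exact_mod_cast hmn : (n : ℝ) < m)
    exact_mod_cast (by linarith : (0 : ℝ) < r)
  obtain ⟨e, he⟩ := Int.eq_ofNat_of_zero_le (Rat.num_pos.2 hr).le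
  have hden : (r.den : ℝ) * r = e := by
    have hnum := Rat.mul_den_eq_num r
    rw [he] at hnum
    rw [mul_comm]
    exact_mod_cast hnum
  have hpow : (m : ℝ) ^ r.den = (n : ℝ) ^ r.den * (p : ℝ) ^ e := by
    refine logb_injOn_pos hp1 (by simp; positivity) (by simp; positivity) ?_
    rw [logb_mul (by positivity) (by positivity), logb_pow, logb_pow, logb_pow,
      logb_self_eq_one hp1]
    linear_combination (r.den : ℝ) * h + hden
  obtain ⟨k, hk⟩ := exists_eq_mul_prime_pow_of_pow_eq hp hn r.den_ne_zero (by exact_mod_cast hpow)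
  refine ⟨k, Nat.one_le_iff_ne_zero.2 ?_, hk⟩
  rintro rfl
  simp only [pow_zero, mul_one] at hk
  omega

lemma defect_sub_defect_mul_pow_three {n : ℕ} (hn : 0 < n) (k : ℕ) :
    defect n - defect (n * 3 ^ k) = cpx n + 3 * k - cpx (n * 3 ^ k) := by
  have hlogb : logb 3 ((n * 3 ^ k : ℕ) : ℝ) = logb 3 n + k := by
    push_cast
    rw [logb_mul (by positivity) (by positivity), logb_pow, logb_self_eq_one (by norm_num)]
    ring
  simp only [defect, hlogb]
  ring

lemma exists_eq_mul_pow_three_of_defect_sub_eq_rat {m n : ℕ} (hn : 0 < n) (hmn : n < m) (q : ℚ)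
    (h : defect n - defect m = q) : ∃ k, 1 ≤ k ∧ m = n * 3 ^ k := by
  have hlogb : logb ((3 : ℕ) : ℝ) m - logb ((3 : ℕ) : ℝ) n = ((q - cpx n + cpx m) / 3 : ℚ) := by
    push_cast
    unfold defect at h
    linarith
  exact exists_eq_mul_prime_pow_of_logb_sub_eq_rat Nat.prime_three hn hmn _ hlogb

/-- If δ(n) − δ(m) is rational (for m > n ≥ 1) then it is a nonnegative integer and
m = n·3^k with k ≥ 1; if moreover δ(n) = δ(m) then ‖n·3^j‖ = 3j + ‖n‖ for 0 ≤ j ≤ k,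
and in particular ‖n‖ ≡ ‖m‖ (mod 3). -/
theorem defect_difference_rational (m n : ℕ) (hn : 0 < n) (hmn : n < m) :
    ((∃ q : ℚ, defect n - defect m = (q : ℝ)) →
      (∃ z : ℕ, defect n - defect m = (z : ℝ)) ∧ ∃ k : ℕ, 1 ≤ k ∧ m = n * 3 ^ k) ∧
    (defect n = defect m →
      ∃ k : ℕ, 1 ≤ k ∧ m = n * 3 ^ k ∧
        (∀ j : ℕ, j ≤ k → cpx (n * 3 ^ j) = 3 * j + cpx n) ∧
        cpx n ≡ cpx m [MOD 3]) := by
  refine ⟨fun ⟨q, hq⟩ => ?_, fun heq => ?_⟩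
  · obtain ⟨k, hk, rfl⟩ := exists_eq_mul_pow_three_of_defect_sub_eq_rat hn hmn q hq
    refine ⟨⟨cpx n + 3 * k - cpx (n * 3 ^ k), ?_⟩, k, hk, rfl⟩
    rw [defect_sub_defect_mul_pow_three hn, Nat.cast_sub (cpx_mul_pow_three_le hn k)]
    push_cast
    ring
  · obtain ⟨k, hk, rfl⟩ := exists_eq_mul_pow_three_of_defect_sub_eq_rat hn hmn 0 (by simp [heq])
    have htight : cpx (n * 3 ^ k) = 3 * k + cpx n := by
      have hzero := defect_sub_defect_mul_pow_three hn k
      rw [heq, sub_self] at hzero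
      exact_mod_cast (by linarith : (cpx (n * 3 ^ k) : ℝ) = 3 * k + cpx n)
    refine ⟨k, hk, rfl, fun j hj => cpx_mul_pow_three_eq_of_eq_of_le hn htight hj, ?_⟩
    rw [htight, Nat.ModEq]
    omega
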